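/- arXiv:2511.01319 — 2 statements merged into one kernel-verified Lean document; each statement's English description precedes it below -/
import Mathlib

section
/- Let m ≥ 3, n ≥ 3, and suppose some C ∈ C'_{m,n} satisfies C∩I_n = S_n and C∩I_{n−1} = T_{n−1}, where no connected component of the subgraph of C_m×P_n induced by S_n is a component of the subgraph induced by S_n∪T_{n−1} and the subgraph induced by S_n∪T_{n−1} has strictly fewer components than the subgraph induced by T_{n−1}. Let X be a nonempty subset of I_{n−2} with X∩T_{n−2} ≠ ∅, where T_{n−2} = {v_{i,n−2} : v_{i,n−1} ∈ T_{n−1}}. If some connected component of the subgraph of C_m×P_n induced by S_n∪T_{n−1} is also a connected component of the subgraph induced by S_n∪T_{n−1}∪X, then N'(K_m×P_n; S_n∪T_{n−1}∪X) = N(K_m×P_{n−2}; X) = f_{m,n−2}^{|X|}. -/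
open SimpleGraph Finset
open scoped Classical

/-- A connected set of a graph: a nonempty vertex subset inducing a connected subgraph. -/
def IsConnSet {V : Type*} (G : SimpleGraph V) (C : Finset V) : Prop :=
  C.Nonempty ∧ (G.induce (C : Set V)).Connected

/-- `N(G)`: the number of connected sets of `G`. -/
noncomputable def numConnSets {V : Type*} (G : SimpleGraph V) : ℕ :=
  {C : Finset V | IsConnSet G C}.ncard

/-- The cycle `C_m` on `Fin m`, labelled as in the paper: `i` is adjacent to `i'` iff
`|i − i'| = 1` or `{i, i'} = {first, last}` (0-indexed: `{0, m−1}`). -/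
def cycleRow (m : ℕ) : SimpleGraph (Fin m) :=
  SimpleGraph.fromRel (fun i i' => i'.1 = i.1 + 1 ∨ (i.1 = 0 ∧ i'.1 = m - 1))

/-- `C_{m,n}`: the connected sets of `K_m×P_n` containing at least one vertex of each
column. -/
def Cmn (m n : ℕ) : Set (Finset (Fin m × Fin n)) :=
  {C | IsConnSet ((⊤ : SimpleGraph (Fin m)) □ pathGraph n) C ∧
       ∀ j : Fin n, (C.filter (fun p => p.2 = j)).Nonempty}

/-- `C'_{m,n}`: the vertex subsets that are connected sets of `K_m×P_n` but not
connected sets of `C_m×P_n` and contain at least one vertex of each column. -/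
def Cmn' (m n : ℕ) : Set (Finset (Fin m × Fin n)) :=
  {C | IsConnSet ((⊤ : SimpleGraph (Fin m)) □ pathGraph n) C ∧
       ¬ IsConnSet (cycleRow m □ pathGraph n) C ∧
       ∀ j : Fin n, (C.filter (fun p => p.2 = j)).Nonempty}

/-- `N(K_m×P_n; X)`: the number of `C ∈ C_{m,n}` with `C∩I_j = X∩I_j` for every
column `I_j` with `X∩I_j ≠ ∅`. -/
noncomputable def Ncount (m n : ℕ) (X : Finset (Fin m × Fin n)) : ℕ :=
  {C | C ∈ Cmn m n ∧ ∀ j : Fin n,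
      (X.filter (fun p => p.2 = j)).Nonempty →
      C.filter (fun p => p.2 = j) = X.filter (fun p => p.2 = j)}.ncard

/-- `N'(K_m×P_n; X)`: the number of `C ∈ C'_{m,n}` with `C∩I_j = X∩I_j` for every
column `I_j` with `X∩I_j ≠ ∅`. -/
noncomputable def N' (m n : ℕ) (X : Finset (Fin m × Fin n)) : ℕ :=
  {C | C ∈ Cmn' m n ∧ ∀ j : Fin n,
      (X.filter (fun p => p.2 = j)).Nonempty →
      C.filter (fun p => p.2 = j) = X.filter (fun p => p.2 = j)}.ncard

/-- `f_{m,n}^i`: the number of sets in `C_{m,n}` whose intersection with the last column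
equals the fixed `i`-element set `{v_{1,n},…,v_{i,n}}`. -/
noncomputable def fval (m n : ℕ) (hn : 0 < n) (i : ℕ) : ℕ :=
  {C : Finset (Fin m × Fin n) | C ∈ Cmn m n ∧
    C.filter (fun p => p.2 = (⟨n - 1, by omega⟩ : Fin n)) =
      (Finset.univ.filter (fun q : Fin m => q.1 < i)).image
        (fun q => (q, (⟨n - 1, by omega⟩ : Fin n)))}.ncard

/-- `R` is (the vertex set of) a connected component of the subgraph of `H` induced by
`S`: `R` is a nonempty subset of `S`, `H[R]` is connected, and there is no edge of `H`
between `R` and `S \ R`. -/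
def IsCompOf {W : Type*} (H : SimpleGraph W) (R S : Finset W) : Prop :=
  R ⊆ S ∧ R.Nonempty ∧ (H.induce (R : Set W)).Connected ∧
  ∀ x ∈ R, ∀ y ∈ S, y ∉ R → ¬ H.Adj x y

/-- `k(H[S])`: the number of connected components of the subgraph of `H` induced by `S`. -/
noncomputable def kcomp {W : Type*} (H : SimpleGraph W) (S : Finset W) : ℕ :=
  Nat.card (H.induce (S : Set W)).ConnectedComponent


/-!
In `K_m × P_n` every column is a clique and consecutive columns are joined only along rows, so a
set meeting every column is connected iff any two consecutive columns share a row. Hence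
`D ↦ D ∪ S_n ∪ T_{n−1}` is a bijection from the sets counted by `N(K_m×P_{n−2}; X)` onto those
counted by `N'(K_m×P_n; S_n∪T_{n−1}∪X)`: a row shared by columns `n−1`, `n` (from the
connectivity of `C`) and a row of `X` lying in `T_{n−1}` glue the pieces, and the component of
`(C_m×P_n)[S_n∪T_{n−1}]` that survives the addition of `X` can reach no other vertex of the glued
set, which is therefore never connected in `C_m×P_n`. Permuting rows is an automorphism of
`K_m×P_n`, so the count depends only on `|X|`, giving `f_{m,n−2}^{|X|}`.
-/
theorem SimpleGraph.not_preconnected_induce_of_closed {V : Type*} {H : SimpleGraph V}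
    {s R : Set V} (hR : ∀ x ∈ R, ∀ y ∈ s, y ∉ R → ¬ H.Adj x y)
    {x y : V} (hx : x ∈ s) (hxR : x ∈ R) (hy : y ∈ s) (hyR : y ∉ R) :
    ¬ (H.induce s).Preconnected := fun h => by
  obtain ⟨w⟩ := h ⟨x, hx⟩ ⟨y, hy⟩
  obtain ⟨d, -, hd, hd'⟩ := w.exists_boundary_dart {v | v.1 ∈ R} hxR hyR
  exact hR _ hd _ d.snd.2 hd' d.adj

theorem Finset.filter_snd_nonempty_iff {α β : Type*} [DecidableEq β] {C : Finset (α × β)}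
    {j : β} : (C.filter (fun p => p.2 = j)).Nonempty ↔ ∃ q, (q, j) ∈ C := by
  constructor
  · rintro ⟨p, hp⟩
    obtain ⟨hpC, rfl⟩ := mem_filter.mp hp
    exact ⟨p.1, hpC⟩
  · rintro ⟨q, hq⟩
    exact ⟨(q, j), mem_filter.mpr ⟨hq, rfl⟩⟩

theorem Finset.filter_snd_agree_iff {α β : Type*} [DecidableEq β] {C Z : Finset (α × β)} :
    (∀ j, (Z.filter (fun p => p.2 = j)).Nonempty →
      C.filter (fun p => p.2 = j) = Z.filter (fun p => p.2 = j)) ↔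
    ∀ p, (∃ z ∈ Z, z.2 = p.2) → (p ∈ C ↔ p ∈ Z) := by
  constructor
  · rintro h p ⟨z, hz, hzp⟩
    simpa using congrArg (p ∈ ·) (h p.2 ⟨z, mem_filter.mpr ⟨hz, hzp⟩⟩)
  · rintro h j ⟨z, hz⟩
    obtain ⟨hzZ, rfl⟩ := mem_filter.mp hz
    ext p
    simp only [mem_filter, and_congr_left_iff]
    exact fun hp => h p ⟨z, hzZ, hp.symm⟩

theorem Finset.mem_image_mk_right {α β : Type*} [DecidableEq α] [DecidableEq β] {X : Finset α}
    {c : β} {p : α × β} : p ∈ X.image (fun q => (q, c)) ↔ p.1 ∈ X ∧ p.2 = c := by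
  constructor
  · intro h
    obtain ⟨q, hq, rfl⟩ := mem_image.mp h
    exact ⟨hq, rfl⟩
  · rintro ⟨hp, hc⟩
    exact mem_image.mpr ⟨p.1, hp, Prod.ext rfl hc.symm⟩

theorem Finset.filter_snd_eq_image_iff {α β : Type*} [DecidableEq α] [DecidableEq β]
    {D : Finset (α × β)} {A : Finset α} {c : β} :
    D.filter (fun p => p.2 = c) = A.image (fun q => (q, c)) ↔ ∀ q, (q, c) ∈ D ↔ q ∈ A := by
  rw [Finset.ext_iff]
  constructor
  · intro h q
    simpa [mem_image_mk_right] using h (q, c)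
  · rintro h ⟨q, j⟩
    simp only [mem_filter, mem_image_mk_right]
    constructor
    · rintro ⟨hq, rfl⟩; exact ⟨(h q).mp hq, rfl⟩
    · rintro ⟨hq, rfl⟩; exact ⟨(h q).mpr hq, rfl⟩

theorem Finset.filter_snd_eq_image_rows {α β : Type*} [Fintype α] [DecidableEq α] [DecidableEq β]
    (C : Finset (α × β)) (j : β) :
    C.filter (fun p => p.2 = j) = (univ.filter fun q => (q, j) ∈ C).image (·, j) :=
  filter_snd_eq_image_iff.mpr fun q => by simp

section Grid

variable {m n : ℕ}

theorem boxProd_top_pathGraph_adj {a b : Fin m × Fin n} :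
    ((⊤ : SimpleGraph (Fin m)) □ pathGraph n).Adj a b ↔
      a.2 = b.2 ∧ a.1 ≠ b.1 ∨ a.1 = b.1 ∧ (a.2.1 + 1 = b.2.1 ∨ b.2.1 + 1 = a.2.1) := by
  simp [boxProd_adj, pathGraph_adj, and_comm]

theorem col_le_succ_of_cycleRow_boxProd_adj {a b : Fin m × Fin n}
    (h : (cycleRow m □ pathGraph n).Adj a b) : a.2.1 ≤ b.2.1 + 1 := by
  rcases boxProd_adj.mp h with ⟨-, h⟩ | ⟨h, -⟩
  · rw [h]; omega
  · rw [pathGraph_adj] at h; omega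

theorem reachable_induce_of_snd_eq {C : Set (Fin m × Fin n)} {u v : Fin m × Fin n}
    (hu : u ∈ C) (hv : v ∈ C) (h : u.2 = v.2) :
    (((⊤ : SimpleGraph (Fin m)) □ pathGraph n).induce C).Reachable ⟨u, hu⟩ ⟨v, hv⟩ := by
  by_cases huv : u = v
  · subst huv; rfl
  · exact Adj.reachable (boxProd_top_pathGraph_adj.mpr (Or.inl ⟨h, fun h1 => huv (Prod.ext h1 h)⟩))

theorem connected_induce_of_links {C : Finset (Fin m × Fin n)} (hn : 0 < n)
    (hcol : ∀ j, ∃ q, (q, j) ∈ C)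
    (hlink : ∀ i j : Fin n, i.1 + 1 = j.1 → ∃ q, (q, i) ∈ C ∧ (q, j) ∈ C) :
    (((⊤ : SimpleGraph (Fin m)) □ pathGraph n).induce (C : Set (Fin m × Fin n))).Connected := by
  obtain ⟨q₀, hq₀⟩ := hcol ⟨0, hn⟩
  have key : ∀ k p (hp : p ∈ C), p.2.1 = k →
      (((⊤ : SimpleGraph (Fin m)) □ pathGraph n).induce (C : Set (Fin m × Fin n))).Reachable
        ⟨_, hq₀⟩ ⟨p, hp⟩ := by
    intro k
    induction k with
    | zero => exact fun p hp hk => reachable_induce_of_snd_eq _ _ (Fin.ext hk.symm)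
    | succ k ih =>
      intro p hp hk
      obtain ⟨q, hqi, hqj⟩ := hlink ⟨k, by omega⟩ p.2 hk.symm
      have hstep : (((⊤ : SimpleGraph (Fin m)) □ pathGraph n).induce
          (C : Set (Fin m × Fin n))).Adj ⟨_, hqi⟩ ⟨_, hqj⟩ :=
        boxProd_top_pathGraph_adj.mpr (Or.inr ⟨rfl, Or.inl hk.symm⟩)
      exact (ih _ hqi rfl).trans (hstep.reachable.trans (reachable_induce_of_snd_eq _ _ rfl))
  rw [connected_iff_exists_forall_reachable]
  exact ⟨_, fun ⟨p, hp⟩ => key _ p hp rfl⟩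

theorem exists_link_of_preconnected {C : Finset (Fin m × Fin n)}
    (hC : (((⊤ : SimpleGraph (Fin m)) □ pathGraph n).induce (C : Set (Fin m × Fin n))).Preconnected)
    {i j : Fin n} (hij : i.1 + 1 = j.1) {a b : Fin m} (ha : (a, i) ∈ C) (hb : (b, j) ∈ C) :
    ∃ q, (q, i) ∈ C ∧ (q, j) ∈ C := by
  obtain ⟨w⟩ := hC ⟨_, ha⟩ ⟨_, hb⟩
  obtain ⟨⟨⟨⟨u, hu⟩, ⟨v, hv⟩⟩, hadj⟩, -, hui, hvi⟩ :=
    w.exists_boundary_dart {v | v.1.2.1 ≤ i.1} (le_refl i.1) (show ¬ j.1 ≤ i.1 by omega)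
  replace hui : u.2.1 ≤ i.1 := hui
  replace hvi : ¬ v.2.1 ≤ i.1 := hvi
  replace hadj : ((⊤ : SimpleGraph (Fin m)) □ pathGraph n).Adj u v := hadj
  rcases boxProd_top_pathGraph_adj.mp hadj with ⟨hcol, -⟩ | ⟨hrow, hcol⟩
  · rw [hcol] at hui; omega
  · have hu' : u.2 = i := Fin.ext (by omega)
    have hv' : v.2 = j := Fin.ext (by omega)
    refine ⟨u.1, ?_, ?_⟩
    · rw [← hu']; exact hu
    · rw [hrow, ← hv']; exact hv

theorem mem_Cmn_iff {C : Finset (Fin m × Fin n)} :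
    C ∈ Cmn m n ↔ C.Nonempty ∧ (∀ j, ∃ q, (q, j) ∈ C) ∧
      ∀ i j : Fin n, i.1 + 1 = j.1 → ∃ q, (q, i) ∈ C ∧ (q, j) ∈ C := by
  simp only [Cmn, Set.mem_ofPred_eq, IsConnSet, filter_snd_nonempty_iff]
  constructor
  · rintro ⟨⟨hne, hconn⟩, hcol⟩
    refine ⟨hne, hcol, fun i j hij => ?_⟩
    obtain ⟨a, ha⟩ := hcol i
    obtain ⟨b, hb⟩ := hcol j
    exact exists_link_of_preconnected hconn.preconnected hij ha hb
  · rintro ⟨hne, hcol, hlink⟩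
    obtain ⟨p, -⟩ := id hne
    exact ⟨⟨hne, connected_induce_of_links p.2.pos hcol hlink⟩, hcol⟩

theorem mem_Cmn'_iff {C : Finset (Fin m × Fin n)} :
    C ∈ Cmn' m n ↔ C ∈ Cmn m n ∧ ¬ IsConnSet (cycleRow m □ pathGraph n) C :=
  ⟨fun ⟨hK, hC, hcol⟩ => ⟨⟨hK, hcol⟩, hC⟩, fun ⟨⟨hK, hcol⟩, hC⟩ => ⟨hK, hC, hcol⟩⟩

end Grid

section Counting

variable {m n : ℕ}

def CmnWithColumn (m n : ℕ) (c : Fin n) (A : Finset (Fin m)) : Set (Finset (Fin m × Fin n)) :=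
  {D | D ∈ Cmn m n ∧ ∀ q, (q, c) ∈ D ↔ q ∈ A}

theorem N'_eq_ncard_agree (Z : Finset (Fin m × Fin n)) :
    N' m n Z = {C | C ∈ Cmn' m n ∧ ∀ p, (∃ z ∈ Z, z.2 = p.2) → (p ∈ C ↔ p ∈ Z)}.ncard := by
  unfold N'
  simp_rw [filter_snd_agree_iff]

theorem Ncount_image_eq_ncard {c : Fin n} {X : Finset (Fin m)} (hX : X.Nonempty) :
    Ncount m n (X.image (fun q => (q, c))) = (CmnWithColumn m n c X).ncard := by
  obtain ⟨x, hx⟩ := hX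
  unfold Ncount CmnWithColumn
  congr 1
  ext D
  simp only [Set.mem_ofPred_eq, filter_snd_agree_iff, mem_image_mk_right]
  refine and_congr_right fun _ => ⟨fun h q => ?_, fun h ⟨q, j⟩ hp => ?_⟩
  · simpa using h (q, c) ⟨(x, c), ⟨hx, rfl⟩, rfl⟩
  · obtain ⟨z, ⟨-, hzc⟩, rfl⟩ := hp
    simpa [hzc] using h q

theorem map_rowPerm_mem_CmnWithColumn_iff (σ : Equiv.Perm (Fin m)) {c : Fin n}
    {A : Finset (Fin m)} {D : Finset (Fin m × Fin n)} :
    D.map (σ.prodCongr (Equiv.refl (Fin n))).toEmbedding ∈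
        CmnWithColumn m n c (A.map σ.toEmbedding) ↔ D ∈ CmnWithColumn m n c A := by
  have hmem : ∀ q j, (q, j) ∈ D.map (σ.prodCongr (Equiv.refl (Fin n))).toEmbedding ↔
      (σ.symm q, j) ∈ D := fun q j => by simp [mem_map_equiv]
  simp only [CmnWithColumn, Set.mem_ofPred_eq, mem_Cmn_iff, hmem, map_nonempty, mem_map_equiv]
  refine and_congr (and_congr Iff.rfl (and_congr ?_ ?_))
    (σ.symm.surjective.forall (p := fun q => (q, c) ∈ D ↔ q ∈ A)).symm
  · exact forall_congr' fun j => (σ.symm.surjective.exists (p := fun q => (q, j) ∈ D)).symm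
  · exact forall₃_congr fun i j _ =>
      (σ.symm.surjective.exists (p := fun q => (q, i) ∈ D ∧ (q, j) ∈ D)).symm

theorem ncard_CmnWithColumn_eq_of_card_eq {c : Fin n} {A B : Finset (Fin m)}
    (h : A.card = B.card) :
    (CmnWithColumn m n c A).ncard = (CmnWithColumn m n c B).ncard := by
  obtain ⟨σ, rfl⟩ := Equiv.Perm.exists_map_finset_eq A B h
  set F := (σ.prodCongr (Equiv.refl (Fin n))).finsetCongr
  have hpre : CmnWithColumn m n c A = F ⁻¹' CmnWithColumn m n c (A.map σ.toEmbedding) :=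
    Set.ext fun _ => (map_rowPerm_mem_CmnWithColumn_iff σ).symm
  rw [hpre, Set.ncard_preimage_of_injective_subset_range F.injective
    (by simp [F.surjective.range_eq])]

theorem fval_eq_ncard (hn : 0 < n) (k : ℕ) :
    fval m n hn k =
      (CmnWithColumn m n ⟨n - 1, by omega⟩ (univ.filter fun q : Fin m => q.1 < k)).ncard := by
  unfold fval CmnWithColumn
  simp_rw [filter_snd_eq_image_iff]

theorem Ncount_image_eq_fval (hn : 0 < n) {c : Fin n} (hc : c.1 = n - 1) {X : Finset (Fin m)}
    (hX : X.Nonempty) : Ncount m n (X.image (fun q => (q, c))) = fval m n hn X.card := by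
  rw [Ncount_image_eq_ncard hX, fval_eq_ncard, show c = ⟨n - 1, by omega⟩ from Fin.ext hc]
  apply ncard_CmnWithColumn_eq_of_card_eq
  rw [Fin.card_filter_val_lt, min_eq_right (X.card_le_univ.trans_eq (Fintype.card_fin m))]

end Counting

section Splice

variable {m n k : ℕ}

def lowerEmb (h : k ≤ n) : Fin m × Fin k ↪ Fin m × Fin n :=
  (Function.Embedding.refl (Fin m)).prodMap (Fin.castLEEmb h)

@[simp]
theorem lowerEmb_apply {h : k ≤ n} (p : Fin m × Fin k) :
    lowerEmb h p = (p.1, Fin.castLE h p.2) :=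
  rfl

def spliceTop (h : k ≤ n) (D : Finset (Fin m × Fin k)) (U : Finset (Fin m × Fin n)) :
    Finset (Fin m × Fin n) :=
  D.map (lowerEmb h) ∪ U

theorem mem_spliceTop {h : k ≤ n} {D : Finset (Fin m × Fin k)} {U : Finset (Fin m × Fin n)}
    {q : Fin m} {j : Fin n} :
    (q, j) ∈ spliceTop h D U ↔ (∃ hj : j.1 < k, (q, ⟨j.1, hj⟩) ∈ D) ∨ (q, j) ∈ U := by
  refine mem_union.trans (or_congr ⟨fun hq => ?_, fun ⟨hj, hD⟩ => mem_map.mpr ⟨_, hD, rfl⟩⟩ Iff.rfl)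
  obtain ⟨⟨q', j'⟩, hD, he⟩ := mem_map.mp hq
  obtain ⟨rfl, rfl⟩ := Prod.mk.inj he
  exact ⟨j'.2, hD⟩

theorem lowerEmb_mem_spliceTop_iff {h : k ≤ n} {D : Finset (Fin m × Fin k)}
    {U : Finset (Fin m × Fin n)} (hU : ∀ p ∈ U, k ≤ p.2.1) (p : Fin m × Fin k) :
    lowerEmb h p ∈ spliceTop h D U ↔ p ∈ D := by
  refine ⟨fun hp => ?_, fun hp => mem_union_left _ (mem_map_of_mem _ hp)⟩
  rcases mem_union.mp hp with hp | hp
  · exact (mem_map' _).mp hp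
  · exact absurd (hU _ hp) (by simp [p.2.2])

theorem spliceTop_injective {h : k ≤ n} {U : Finset (Fin m × Fin n)}
    (hU : ∀ p ∈ U, k ≤ p.2.1) : Function.Injective (spliceTop h · U) := fun D₁ D₂ he =>
  ext fun p => by
    rw [← lowerEmb_mem_spliceTop_iff (h := h) hU, ← lowerEmb_mem_spliceTop_iff (h := h) hU]
    exact Eq.to_iff (congrArg (lowerEmb h p ∈ ·) he)

variable {A B X : Finset (Fin m)} {a b : Fin n} {c : Fin k}

theorem spliceTop_mem_Cmn (hk : k + 2 = n) (ha : a.1 = k + 1) (hb : b.1 = k) (hc : c.1 + 1 = k)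
    (hAB : (A ∩ B).Nonempty) (hXB : (X ∩ B).Nonempty) {D : Finset (Fin m × Fin k)}
    (hD : D ∈ CmnWithColumn m k c X) :
    spliceTop (Nat.le.intro hk) D (A.image (·, a) ∪ B.image (·, b)) ∈ Cmn m n := by
  obtain ⟨hD, hDX⟩ := hD
  obtain ⟨hDne, hDcol, hDlink⟩ := mem_Cmn_iff.mp hD
  obtain ⟨r, hr⟩ := hAB
  obtain ⟨x, hx⟩ := hXB
  rw [mem_inter] at hr hx
  refine mem_Cmn_iff.mpr ⟨hDne.map.mono subset_union_left, fun j => ?_, fun i j hij => ?_⟩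
  all_goals simp only [mem_spliceTop, mem_union, mem_image_mk_right, Fin.ext_iff, ha, hb]
  · by_cases hj : j.1 < k
    · obtain ⟨q, hq⟩ := hDcol ⟨j.1, hj⟩
      exact ⟨q, Or.inl ⟨hj, hq⟩⟩
    · rcases (show j.1 = k + 1 ∨ j.1 = k by omega) with h | h
      exacts [⟨r, Or.inr (Or.inl ⟨hr.1, h⟩)⟩, ⟨r, Or.inr (Or.inr ⟨hr.2, h⟩)⟩]
  · by_cases hj : j.1 < k
    · obtain ⟨q, hqi, hqj⟩ := hDlink ⟨i.1, by omega⟩ ⟨j.1, hj⟩ hij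
      exact ⟨q, Or.inl ⟨_, hqi⟩, Or.inl ⟨hj, hqj⟩⟩
    by_cases hj' : j.1 = k
    · refine ⟨x, Or.inl ⟨by omega, ?_⟩, Or.inr (Or.inr ⟨hx.2, hj'⟩)⟩
      rw [show (⟨i.1, by omega⟩ : Fin k) = c from Fin.ext (show i.1 = c.1 by omega)]
      exact (hDX x).mpr hx.1
    · exact ⟨r, Or.inr (Or.inr ⟨hr.2, by omega⟩), Or.inr (Or.inl ⟨hr.1, by omega⟩)⟩

theorem mem_spliceTop_iff_of_le (hk : k + 2 = n) (ha : a.1 = k + 1) (hb : b.1 = k)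
    (hc : c.1 + 1 = k) {D : Finset (Fin m × Fin k)} (hDX : ∀ q, (q, c) ∈ D ↔ q ∈ X)
    {q : Fin m} {j : Fin n} (hj : k ≤ j.1 + 1) :
    (q, j) ∈ spliceTop (Nat.le.intro hk) D (A.image (·, a) ∪ B.image (·, b)) ↔
      (q, j) ∈ A.image (·, a) ∪ B.image (·, b) ∪ X.image (·, Fin.castLE (Nat.le.intro hk) c) := by
  simp only [mem_spliceTop, mem_union, mem_image_mk_right, Fin.ext_iff, ha, hb, Fin.val_castLE]
  have hjD : ∀ hj' : j.1 < k, (q, ⟨j.1, hj'⟩) ∈ D ↔ q ∈ X := fun hj' => by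
    rw [show (⟨j.1, hj'⟩ : Fin k) = c from Fin.ext (show j.1 = c.1 by omega), hDX]
  constructor
  · rintro (⟨hj', hD⟩ | h)
    · exact Or.inr ⟨(hjD hj').mp hD, by omega⟩
    · exact Or.inl h
  · rintro (h | ⟨hq, hjc⟩)
    · exact Or.inr h
    · exact Or.inl ⟨by omega, (hjD (by omega)).mpr hq⟩

theorem spliceTop_not_isConnSet (hk : k + 2 = n) (ha : a.1 = k + 1) (hb : b.1 = k)
    (hc : c.1 + 1 = k) (hXB : (X ∩ B).Nonempty) {D : Finset (Fin m × Fin k)}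
    (hDX : ∀ q, (q, c) ∈ D ↔ q ∈ X) {R : Finset (Fin m × Fin n)}
    (hRtop : R ⊆ A.image (·, a) ∪ B.image (·, b)) (hR : R.Nonempty)
    (hRclosed : ∀ x ∈ R,
      ∀ y ∈ A.image (·, a) ∪ B.image (·, b) ∪ X.image (·, Fin.castLE (Nat.le.intro hk) c),
      y ∉ R → ¬ (cycleRow m □ pathGraph n).Adj x y) :
    ¬ IsConnSet (cycleRow m □ pathGraph n)
      (spliceTop (Nat.le.intro hk) D (A.image (·, a) ∪ B.image (·, b))) := by
  rintro ⟨-, hconn⟩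
  have hRcol : ∀ p ∈ R, k ≤ p.2.1 := fun p hp => by
    have := hRtop hp
    simp only [mem_union, mem_image_mk_right, Fin.ext_iff, ha, hb] at this
    omega
  obtain ⟨r, hr⟩ := hR
  obtain ⟨x, hx⟩ := hXB
  rw [mem_inter] at hx
  have hxc : (x, Fin.castLE (Nat.le.intro hk) c) ∈
      spliceTop (Nat.le.intro hk) D (A.image (·, a) ∪ B.image (·, b)) := by
    rw [mem_spliceTop_iff_of_le hk ha hb hc hDX (show k ≤ c.1 + 1 by omega)]
    exact mem_union_right _ (mem_image_mk_right.mpr ⟨hx.1, rfl⟩)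
  have hxR : (x, Fin.castLE (Nat.le.intro hk) c) ∉ R := fun h => by
    have : k ≤ c.1 := hRcol _ h
    omega
  refine not_preconnected_induce_of_closed (R := (R : Set (Fin m × Fin n))) ?_
    (mem_union_right _ (hRtop hr)) hr hxc hxR hconn.preconnected
  rintro u hu ⟨q, j⟩ hv hvR hadj
  by_cases hj : k ≤ j.1 + 1
  · exact hRclosed u hu _ ((mem_spliceTop_iff_of_le hk ha hb hc hDX hj).mp hv) hvR hadj
  · have hadj' : u.2.1 ≤ j.1 + 1 := col_le_succ_of_cycleRow_boxProd_adj hadj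
    have := hRcol u hu
    omega

theorem exists_spliceTop_eq (hk : k + 2 = n) (ha : a.1 = k + 1) (hb : b.1 = k)
    (hc : c.1 + 1 = k) {C : Finset (Fin m × Fin n)} (hC : C ∈ Cmn m n)
    (hCtop : ∀ q (j : Fin n), k ≤ j.1 + 1 → ((q, j) ∈ C ↔
      (q, j) ∈ A.image (·, a) ∪ B.image (·, b) ∪ X.image (·, Fin.castLE (Nat.le.intro hk) c))) :
    ∃ D ∈ CmnWithColumn m k c X,
      spliceTop (Nat.le.intro hk) D (A.image (·, a) ∪ B.image (·, b)) = C := by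
  obtain ⟨-, hcol, hlink⟩ := mem_Cmn_iff.mp hC
  set D := C.preimage (lowerEmb (Nat.le.intro hk)) (lowerEmb _).injective.injOn
  have hmemD : ∀ q j, (q, j) ∈ D ↔ (q, Fin.castLE (Nat.le.intro hk) j) ∈ C := fun q j =>
    mem_preimage
  refine ⟨D, ⟨mem_Cmn_iff.mpr ⟨?_, fun j => ?_, fun i j hij => ?_⟩, fun q => ?_⟩, ?_⟩
  · obtain ⟨q, hq⟩ := hcol ⟨0, by omega⟩
    exact ⟨(q, ⟨0, by omega⟩), (hmemD _ _).mpr hq⟩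
  · simpa only [hmemD] using hcol _
  · simpa only [hmemD] using hlink _ _ hij
  · rw [hmemD, hCtop _ _ (by simp; omega)]
    have h₁ : c.1 ≠ k + 1 := by omega
    have h₂ : c.1 ≠ k := by omega
    simp only [mem_union, mem_image_mk_right, Fin.ext_iff, Fin.val_castLE, ha, hb, h₁, h₂,
      and_false, false_or, and_true]
  · ext ⟨q, j⟩
    rw [mem_spliceTop]
    by_cases hj : j.1 < k
    · have htop : (q, j) ∉ A.image (·, a) ∪ B.image (·, b) := by
        simp only [mem_union, mem_image_mk_right, Fin.ext_iff, ha, hb]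
        omega
      rw [or_iff_left htop]
      exact ⟨fun ⟨_, h⟩ => (hmemD _ _).mp h, fun h => ⟨hj, (hmemD _ _).mpr h⟩⟩
    · have hlow : (q, j) ∉ X.image (·, Fin.castLE (Nat.le.intro hk) c) := by
        simp only [mem_image_mk_right, Fin.ext_iff, Fin.val_castLE]
        omega
      rw [hCtop q j (by omega), mem_union (s := _ ∪ _), or_iff_left hlow]
      exact ⟨fun h => h.resolve_left fun ⟨h', _⟩ => hj h', Or.inr⟩

theorem N'_eq_ncard_CmnWithColumn (hk : k + 2 = n) (ha : a.1 = k + 1) (hb : b.1 = k)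
    (hc : c.1 + 1 = k) (hAB : (A ∩ B).Nonempty) (hXB : (X ∩ B).Nonempty)
    {R : Finset (Fin m × Fin n)} (hRtop : R ⊆ A.image (·, a) ∪ B.image (·, b))
    (hR : R.Nonempty)
    (hRclosed : ∀ x ∈ R,
      ∀ y ∈ A.image (·, a) ∪ B.image (·, b) ∪ X.image (·, Fin.castLE (Nat.le.intro hk) c),
      y ∉ R → ¬ (cycleRow m □ pathGraph n).Adj x y) :
    N' m n (A.image (·, a) ∪ B.image (·, b) ∪ X.image (·, Fin.castLE (Nat.le.intro hk) c)) =
      (CmnWithColumn m k c X).ncard := by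
  have hcols : ∀ p : Fin m × Fin n, (∃ z ∈ A.image (·, a) ∪ B.image (·, b) ∪
      X.image (·, Fin.castLE (Nat.le.intro hk) c), z.2 = p.2) ↔ k ≤ p.2.1 + 1 := by
    intro p
    constructor
    · rintro ⟨z, hz, hzp⟩
      rw [← hzp]
      simp only [mem_union, mem_image_mk_right, Fin.ext_iff, Fin.val_castLE, ha, hb] at hz
      omega
    · intro hp
      obtain ⟨r, hr⟩ := hAB
      obtain ⟨x, hx⟩ := hXB
      rw [mem_inter] at hr hx
      rcases (show p.2.1 = k + 1 ∨ p.2.1 = k ∨ p.2.1 + 1 = k by omega) with h | h | h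
      · exact ⟨(r, a), mem_union_left _ (mem_union_left _ (mem_image_of_mem _ hr.1)),
          Fin.ext (ha.trans h.symm)⟩
      · exact ⟨(r, b), mem_union_left _ (mem_union_right _ (mem_image_of_mem _ hr.2)),
          Fin.ext (hb.trans h.symm)⟩
      · exact ⟨(x, Fin.castLE _ c), mem_union_right _ (mem_image_of_mem _ hx.1),
          Fin.ext (show c.1 = p.2.1 by omega)⟩
  have hU : ∀ p ∈ A.image (·, a) ∪ B.image (·, b), k ≤ p.2.1 := fun p hp => by
    simp only [mem_union, mem_image_mk_right, Fin.ext_iff, ha, hb] at hp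
    omega
  rw [N'_eq_ncard_agree, ← Set.ncard_image_of_injective _ (spliceTop_injective hU)]
  congr 1
  ext C
  simp only [Set.mem_ofPred_eq, Set.mem_image, hcols, mem_Cmn'_iff]
  constructor
  · rintro ⟨⟨hC, -⟩, hCtop⟩
    exact exists_spliceTop_eq hk ha hb hc hC fun q j => hCtop (q, j)
  · rintro ⟨D, hD, rfl⟩
    exact ⟨⟨spliceTop_mem_Cmn hk ha hb hc hAB hXB hD,
      spliceTop_not_isConnSet hk ha hb hc hXB hD.2 hRtop hR hRclosed⟩,
      fun ⟨q, j⟩ hj => mem_spliceTop_iff_of_le hk ha hb hc hD.2 hj⟩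

end Splice

/-- Under the hypotheses of Statement 15, let `X` be a nonempty subset
of `I_{n−2}` with `X∩T_{n−2} ≠ ∅`. If some connected component of
`(C_m×P_n)[S_n ∪ T_{n−1}]` is also a connected component of
`(C_m×P_n)[S_n ∪ T_{n−1} ∪ X]`, then
`N'(K_m×P_n; S_n∪T_{n−1}∪X) = N(K_m×P_{n−2}; X) = f_{m,n−2}^{|X|}`. -/
theorem statement16 (m n : ℕ) (hn : 3 ≤ n)
    (C : Finset (Fin m × Fin n)) (hC : C ∈ Cmn' m n)
    (Sn Tn1 : Finset (Fin m × Fin n))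
    (hSn : Sn = C.filter (fun p => p.2 = (⟨n - 1, by omega⟩ : Fin n)))
    (hTn1 : Tn1 = C.filter (fun p => p.2 = (⟨n - 2, by omega⟩ : Fin n)))
    (X : Finset (Fin m))
    (hXT : (X ∩ Tn1.image Prod.fst).Nonempty)
    (hcomp2 : ∃ R, IsCompOf (cycleRow m □ pathGraph n) R (Sn ∪ Tn1) ∧
      IsCompOf (cycleRow m □ pathGraph n) R
        (Sn ∪ Tn1 ∪ X.image (fun q => (q, (⟨n - 3, by omega⟩ : Fin n))))) :
    N' m n (Sn ∪ Tn1 ∪ X.image (fun q => (q, (⟨n - 3, by omega⟩ : Fin n)))) =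
      Ncount m (n - 2) (X.image (fun q => (q, (⟨n - 3, by omega⟩ : Fin (n - 2))))) ∧
    N' m n (Sn ∪ Tn1 ∪ X.image (fun q => (q, (⟨n - 3, by omega⟩ : Fin n)))) =
      fval m (n - 2) (by omega) X.card := by
  rw [filter_snd_eq_image_rows] at hSn hTn1
  subst hSn hTn1
  have hXB : (X ∩ univ.filter fun q => (q, ⟨n - 2, by omega⟩) ∈ C).Nonempty := by
    simpa [image_image, Function.comp_def] using hXT
  have hX : X.Nonempty := hXB.mono inter_subset_left
  obtain ⟨q, hq⟩ := (mem_Cmn_iff.mp (mem_Cmn'_iff.mp hC).1).2.2 ⟨n - 2, by omega⟩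
    ⟨n - 1, by omega⟩ (show n - 2 + 1 = n - 1 by omega)
  have hAB : ((univ.filter fun q => (q, ⟨n - 1, by omega⟩) ∈ C) ∩
      (univ.filter fun q => (q, ⟨n - 2, by omega⟩) ∈ C)).Nonempty := ⟨q, by simp [hq]⟩
  obtain ⟨R, hR, hR'⟩ := hcomp2
  have hN' := N'_eq_ncard_CmnWithColumn (k := n - 2) (c := ⟨n - 3, by omega⟩) (by omega)
    (show n - 1 = n - 2 + 1 by omega) rfl (show n - 3 + 1 = n - 2 by omega) hAB hXB
    hR.1 hR.2.1 hR'.2.2.2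
  have hNcount := Ncount_image_eq_ncard (c := (⟨n - 3, by omega⟩ : Fin (n - 2))) hX
  refine ⟨hN'.trans hNcount.symm, hN'.trans (hNcount.symm.trans ?_)⟩
  exact Ncount_image_eq_fval (by omega) (show n - 3 = n - 2 - 1 by omega) hX
end

section
/- Let m ≥ 3, n ≥ 3, and suppose some C ∈ C'_{m,n} satisfies C∩I_n = S_n and C∩I_{n−1} = T_{n−1}, where no connected component of the subgraph of C_m×P_n induced by S_n is a component of the subgraph induced by S_n∪T_{n−1} and the subgraph induced by S_n∪T_{n−1} has strictly fewer components than the subgraph induced by T_{n−1}. Let X be a nonempty subset of I_{n−2} with X∩T_{n−2} ≠ ∅, where T_{n−2} = {v_{i,n−2} : v_{i,n−1} ∈ T_{n−1}}. If no connected component of the subgraph of C_m×P_n induced by S_n∪T_{n−1} is a component of the subgraph induced by S_n∪T_{n−1}∪X, and the subgraph induced by S_n∪T_{n−1}∪X has the same number of connected components as the subgraph induced by X, then N'(K_m×P_n; S_n∪T_{n−1}∪X) = N'(K_m×P_{n−2}; X). -/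
open SimpleGraph Finset
open scoped Classical

section Aux
variable {V : Type*} {V' : Type*}

/-- There is a walk from `u` to `v` in `H` whose support stays inside `s`. -/
def hasWalkIn (H : SimpleGraph V) (s : Set V) (u v : V) : Prop :=
  ∃ p : H.Walk u v, ∀ x ∈ p.support, x ∈ s

namespace hasWalkIn

variable {H H' : SimpleGraph V} {s t : Set V} {u v w : V}

lemma refl (hu : u ∈ s) : hasWalkIn H s u u :=
  ⟨.nil, by simpa using hu⟩

lemma symm (h : hasWalkIn H s u v) : hasWalkIn H s v u := by
  obtain ⟨p, hp⟩ := h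
  exact ⟨p.reverse, by simpa [SimpleGraph.Walk.support_reverse] using hp⟩

lemma trans (h1 : hasWalkIn H s u v) (h2 : hasWalkIn H s v w) : hasWalkIn H s u w := by
  obtain ⟨p, hp⟩ := h1; obtain ⟨q, hq⟩ := h2
  refine ⟨p.append q, fun x hx => ?_⟩
  rcases (SimpleGraph.Walk.mem_support_append_iff _ _).1 hx with h | h
  · exact hp x h
  · exact hq x h

lemma cons (h : H.Adj u v) (hu : u ∈ s) (hw : hasWalkIn H s v w) : hasWalkIn H s u w := by
  obtain ⟨p, hp⟩ := hw
  refine ⟨.cons h p, fun x hx => ?_⟩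
  rw [SimpleGraph.Walk.support_cons] at hx
  rcases List.mem_cons.1 hx with rfl | h'
  · exact hu
  · exact hp x h'

lemma of_adj (h : H.Adj u v) (hu : u ∈ s) (hv : v ∈ s) : hasWalkIn H s u v :=
  cons h hu (refl hv)

lemma mono_set (hst : s ⊆ t) (h : hasWalkIn H s u v) : hasWalkIn H t u v := by
  obtain ⟨p, hp⟩ := h
  exact ⟨p, fun x hx => hst (hp x hx)⟩

lemma mono_graph (hle : H ≤ H') (h : hasWalkIn H s u v) : hasWalkIn H' s u v := by
  obtain ⟨p, hp⟩ := h
  induction p with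
  | nil => exact refl (hp _ (by simp))
  | cons ha q ih =>
      refine cons (hle ha) (hp _ (by simp)) (ih fun x hx => hp x ?_)
      rw [SimpleGraph.Walk.support_cons]
      exact List.mem_cons_of_mem _ hx

lemma mem_left (h : hasWalkIn H s u v) : u ∈ s := by
  obtain ⟨p, hp⟩ := h; exact hp u p.start_mem_support

lemma mem_right (h : hasWalkIn H s u v) : v ∈ s := by
  obtain ⟨p, hp⟩ := h; exact hp v p.end_mem_support

end hasWalkIn

lemma reachable_induce_of_hasWalkIn {H : SimpleGraph V} {s : Set V} :
    ∀ {u v : V}, hasWalkIn H s u v → ∀ (hu : u ∈ s) (hv : v ∈ s),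
      (H.induce s).Reachable ⟨u, hu⟩ ⟨v, hv⟩ := by
  rintro u v ⟨p, hp⟩
  induction p with
  | nil => intro hu hv; exact Reachable.refl _
  | @cons a b c ha q ih =>
      intro hu hv
      have hb : b ∈ s := hp b (by simp)
      have : (H.induce s).Adj ⟨a, hu⟩ ⟨b, hb⟩ := by
        simp only [comap_adj, Function.Embedding.coe_subtype]
        exact ha
      exact this.reachable.trans (ih (fun x hx => hp x (by
        rw [SimpleGraph.Walk.support_cons]; exact List.mem_cons_of_mem _ hx)) hb hv)

lemma hasWalkIn_of_reachable_induce {H : SimpleGraph V} {s : Set V}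
    {a b : ↥s} (h : (H.induce s).Reachable a b) : hasWalkIn H s a.1 b.1 := by
  obtain ⟨p⟩ := h
  induction p with
  | nil => exact hasWalkIn.refl (Subtype.coe_prop _)
  | @cons x y z ha q ih =>
      refine hasWalkIn.cons ?_ x.2 ih
      simpa using ha

lemma reach_iff {H : SimpleGraph V} {s : Set V} {u v : V} (hu : u ∈ s) (hv : v ∈ s) :
    (H.induce s).Reachable ⟨u, hu⟩ ⟨v, hv⟩ ↔ hasWalkIn H s u v := by
  constructor
  · intro h; exact hasWalkIn_of_reachable_induce h
  · intro h; exact reachable_induce_of_hasWalkIn h hu hv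

lemma connIff (H : SimpleGraph V) (F : Finset V) :
    IsConnSet H F ↔ F.Nonempty ∧ ∀ u ∈ F, ∀ v ∈ F, hasWalkIn H (↑F : Set V) u v := by
  constructor
  · rintro ⟨hne, hconn⟩
    refine ⟨hne, fun u hu v hv => ?_⟩
    exact hasWalkIn_of_reachable_induce (hconn.preconnected ⟨u, hu⟩ ⟨v, hv⟩)
  · rintro ⟨hne, h⟩
    refine ⟨hne, ?_⟩
    rw [SimpleGraph.connected_iff]
    refine ⟨fun a b => ?_, ?_⟩
    · obtain ⟨u, hu⟩ := a; obtain ⟨v, hv⟩ := b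
      exact reachable_induce_of_hasWalkIn (h u hu v hv) hu hv
    · obtain ⟨u, hu⟩ := hne; exact ⟨⟨u, hu⟩⟩

end Aux

section Aux2
variable {V : Type*} {V' : Type*}

/-- The connected component (as a `Finset`) of `u` in the subgraph induced on `S`. -/
lemma compOf_isCompOf (H : SimpleGraph V) (S : Finset V) {u : V} (hu : u ∈ S) :
    IsCompOf H (S.filter (fun w => hasWalkIn H (↑S : Set V) u w)) S ∧
      u ∈ S.filter (fun w => hasWalkIn H (↑S : Set V) u w) := by
  classical
  set R := S.filter (fun w => hasWalkIn H (↑S : Set V) u w) with hR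
  have huR : u ∈ R := by
    rw [hR, Finset.mem_filter]; exact ⟨hu, hasWalkIn.refl (by simpa using hu)⟩
  have hsupp : ∀ {a : V}, a ∈ R → hasWalkIn H (↑R : Set V) u a := by
    intro a ha
    obtain ⟨haS, ⟨p, hp⟩⟩ := Finset.mem_filter.1 ha
    refine ⟨p, fun x hx => ?_⟩
    simp only [hR, Finset.coe_filter, Set.mem_setOf_eq]
    refine ⟨by simpa using hp x hx, ⟨p.takeUntil x hx, fun y hy => hp y ?_⟩⟩
    exact (SimpleGraph.Walk.support_takeUntil_subset p hx) hy
  constructor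
  · refine ⟨Finset.filter_subset _ _, ⟨u, huR⟩, ?_, ?_⟩
    · have := (connIff H R).2 ⟨⟨u, huR⟩, fun a ha b hb =>
        (hsupp ha).symm.trans (hsupp hb)⟩
      exact this.2
    · intro x hx y hy hyR hadj
      refine hyR ?_
      rw [hR, Finset.mem_filter]
      obtain ⟨hxS, hwx⟩ := Finset.mem_filter.1 hx
      exact ⟨hy, hwx.trans (hasWalkIn.of_adj hadj (by simpa using hxS) (by simpa using hy))⟩
  · exact huR

lemma not_isCompOf_elim {H : SimpleGraph V} {R S S' : Finset V}
    (h1 : IsCompOf H R S) (hsub : S ⊆ S') (h2 : ¬ IsCompOf H R S') :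
    ∃ x ∈ R, ∃ y ∈ S', y ∉ R ∧ H.Adj x y := by
  by_contra hc
  push_neg at hc
  exact h2 ⟨h1.1.trans hsub, h1.2.1, h1.2.2.1, fun x hx y hy hyR => hc x hx y hy hyR⟩

lemma trunc {H : SimpleGraph V} {B U Xb : Finset V}
    (hdisj : ∀ x, x ∈ B → x ∈ U → False)
    (hbd : ∀ b ∈ B, ∀ u ∈ U, H.Adj b u → b ∈ Xb)
    (hbr : ∀ x ∈ Xb, ∀ y ∈ Xb, hasWalkIn H (↑U ∪ ↑Xb : Set V) x y → hasWalkIn H (↑B : Set V) x y)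
    {u v : V} (hu : u ∈ B) (hv : v ∈ B)
    (h : hasWalkIn H (↑B ∪ ↑U : Set V) u v) : hasWalkIn H (↑B : Set V) u v := by
  classical
  obtain ⟨p, hp⟩ := h
  have main : ∀ k, ∀ (a b : V) (q : H.Walk a b), q.length ≤ k →
      (∀ x ∈ q.support, x ∈ (↑B ∪ ↑U : Set V)) → b ∈ B →
      ((a ∈ B → hasWalkIn H (↑B : Set V) a b) ∧
       (a ∈ U → ∃ x ∈ Xb, hasWalkIn H (↑U ∪ ↑Xb : Set V) a x ∧ hasWalkIn H (↑B : Set V) x b)) := by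
    intro k
    induction k with
    | zero =>
        intro a b q hlen hsup hb
        cases q with
        | nil =>
            exact ⟨fun ha => hasWalkIn.refl (by simpa using ha),
              fun ha => absurd (hdisj a hb ha) not_false⟩
        | cons h' q' => simp [SimpleGraph.Walk.length_cons] at hlen
    | succ k ih =>
        intro a b q hlen hsup hb
        cases q with
        | nil =>
            exact ⟨fun ha => hasWalkIn.refl (by simpa using ha),
              fun ha => absurd (hdisj a hb ha) not_false⟩
        | @cons _ w _ h' q' =>
            have hlen' : q'.length ≤ k := by
              simpa [SimpleGraph.Walk.length_cons] using hlen
            have hsup' : ∀ x ∈ q'.support, x ∈ (↑B ∪ ↑U : Set V) := fun x hx =>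
              hsup x (by rw [SimpleGraph.Walk.support_cons]; exact List.mem_cons_of_mem _ hx)
            have ihq := ih w b q' hlen' hsup' hb
            have hwBU : w ∈ (↑B ∪ ↑U : Set V) := hsup' w q'.start_mem_support
            constructor
            · intro ha
              rcases hwBU with hwB | hwU
              · have hwB' : w ∈ B := by simpa using hwB
                exact hasWalkIn.cons h' (by simpa using ha) (ihq.1 hwB')
              · have hwU' : w ∈ U := by simpa using hwU
                have haXb : a ∈ Xb := hbd a ha w hwU' h'
                obtain ⟨x, hx, hw1, hw2⟩ := ihq.2 hwU'
                have : hasWalkIn H (↑U ∪ ↑Xb : Set V) a x :=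
                  hasWalkIn.cons h' (Or.inr (by simpa using haXb)) hw1
                exact (hbr a haXb x hx this).trans hw2
            · intro ha
              rcases hwBU with hwB | hwU
              · have hwB' : w ∈ B := by simpa using hwB
                have hwXb : w ∈ Xb := hbd w hwB' a ha h'.symm
                refine ⟨w, hwXb, ?_, ihq.1 hwB'⟩
                exact hasWalkIn.of_adj h' (Or.inl (by simpa using ha))
                  (Or.inr (by simpa using hwXb))
              · have hwU' : w ∈ U := by simpa using hwU
                obtain ⟨x, hx, hw1, hw2⟩ := ihq.2 hwU'
                exact ⟨x, hx, hasWalkIn.cons h' (Or.inl (by simpa using ha)) hw1, hw2⟩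
  exact (main p.length u v p le_rfl hp hv).1 hu

lemma glue [DecidableEq V] {H : SimpleGraph V} {B U : Finset V}
    (hB : ∀ u ∈ B, ∀ v ∈ B, hasWalkIn H (↑B : Set V) u v)
    (hU : ∀ u ∈ U, ∃ x ∈ B, hasWalkIn H (↑B ∪ ↑U : Set V) u x) :
    ∀ u ∈ B ∪ U, ∀ v ∈ B ∪ U, hasWalkIn H (↑(B ∪ U) : Set V) u v := by
  classical
  have hco : (↑(B ∪ U) : Set V) = ↑B ∪ ↑U := by simp
  have key : ∀ w ∈ B ∪ U, ∃ x ∈ B, hasWalkIn H (↑B ∪ ↑U : Set V) w x := by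
    intro w hw
    rcases Finset.mem_union.1 hw with hwB | hwU
    · exact ⟨w, hwB, hasWalkIn.refl (Or.inl (by simpa using hwB))⟩
    · exact hU w hwU
  intro u hu v hv
  obtain ⟨x, hxB, hwx⟩ := key u hu
  obtain ⟨y, hyB, hwy⟩ := key v hv
  rw [hco]
  exact (hwx.trans ((hB x hxB y hyB).mono_set (by exact Set.subset_union_left))).trans hwy.symm

lemma transfer [DecidableEq V'] {H' : SimpleGraph V'} {H : SimpleGraph V} {f : V → V'}
    (hinj : Function.Injective f)
    (hadj : ∀ a b, H'.Adj (f a) (f b) ↔ H.Adj a b) (D : Finset V) {u v : V} :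
    hasWalkIn H' (↑(D.image f) : Set V') (f u) (f v) ↔ hasWalkIn H (↑D : Set V) u v := by
  classical
  have hmem : ∀ {w : V}, f w ∈ (↑(D.image f) : Set V') → w ∈ D := by
    intro w hw
    simp only [Finset.coe_image, Set.mem_image, Finset.mem_coe] at hw
    obtain ⟨w', hw', hwf'⟩ := hw
    rwa [hinj hwf'] at hw'
  have hmem' : ∀ {w : V}, w ∈ D → f w ∈ (↑(D.image f) : Set V') := by
    intro w hw
    simp only [Finset.coe_image, Set.mem_image, Finset.mem_coe]
    exact ⟨w, hw, rfl⟩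
  constructor
  · rintro ⟨p, hp⟩
    have main : ∀ (a b : V') (q : H'.Walk a b),
        (∀ x ∈ q.support, x ∈ (↑(D.image f) : Set V')) →
        ∀ u' v' : V, a = f u' → b = f v' → hasWalkIn H (↑D : Set V) u' v' := by
      intro a b q
      induction q with
      | nil =>
          intro hs u' v' ha hb
          have huv : u' = v' := hinj (ha ▸ hb : f u' = f v')
          subst huv
          exact hasWalkIn.refl (by exact_mod_cast hmem (hs _ (by simp [ha])))
      | @cons x y z h' q' ih =>
          intro hs u' v' ha hb
          subst ha
          have hy : y ∈ (↑(D.image f) : Set V') := by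
            refine hs y ?_
            rw [SimpleGraph.Walk.support_cons]
            exact List.mem_cons_of_mem _ q'.start_mem_support
          simp only [Finset.coe_image, Set.mem_image, Finset.mem_coe] at hy
          obtain ⟨w, hw, hwf⟩ := hy
          have hadj' : H.Adj u' w := by
            rw [← hadj]
            rw [← hwf] at h'
            exact h'
          have hu'D : u' ∈ D := hmem (hs _ (by simp))
          refine hasWalkIn.cons hadj' (by exact_mod_cast hu'D) ?_
          refine ih ?_ w v' hwf.symm hb
          intro x hx
          refine hs x ?_
          rw [SimpleGraph.Walk.support_cons]
          exact List.mem_cons_of_mem _ hx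
    exact main _ _ p hp u v rfl rfl
  · rintro ⟨p, hp⟩
    have main2 : ∀ (a b : V) (q : H.Walk a b), (∀ x ∈ q.support, x ∈ (↑D : Set V)) →
        hasWalkIn H' (↑(D.image f) : Set V') (f a) (f b) := by
      intro a b q
      induction q with
      | nil =>
          intro hs
          exact hasWalkIn.refl (hmem' (by exact_mod_cast hs _ (by simp)))
      | @cons x y z h' q' ih =>
          intro hs
          refine hasWalkIn.cons ((hadj _ _).2 h') (hmem' (by exact_mod_cast hs x (by simp))) ?_
          refine ih ?_
          intro c hc
          refine hs c ?_
          rw [SimpleGraph.Walk.support_cons]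
          exact List.mem_cons_of_mem _ hc
    exact main2 u v p hp

lemma comp_collapse {H : SimpleGraph V} {Xb W : Finset V} (hsub : Xb ⊆ W)
    (hreach : ∀ w ∈ W, ∃ x ∈ Xb, hasWalkIn H (↑W : Set V) w x)
    (hcard : Nat.card (H.induce (↑W : Set V)).ConnectedComponent =
      Nat.card (H.induce (↑Xb : Set V)).ConnectedComponent) :
    ∀ x ∈ Xb, ∀ y ∈ Xb, hasWalkIn H (↑W : Set V) x y → hasWalkIn H (↑Xb : Set V) x y := by
  classical
  have hsub' : (↑Xb : Set V) ⊆ ↑W := by exact_mod_cast hsub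
  let ι : H.induce (↑Xb : Set V) →g H.induce (↑W : Set V) :=
    ⟨fun a => ⟨a.1, hsub' a.2⟩, by
      intro a b hab
      simp only [comap_adj, Function.Embedding.coe_subtype] at hab ⊢
      exact hab⟩
  let f := SimpleGraph.ConnectedComponent.map ι
  have hfs : Function.Surjective f := by
    intro c
    obtain ⟨⟨w, hw⟩, rfl⟩ := c.exists_rep
    have hwW : w ∈ W := by simpa using hw
    obtain ⟨x, hx, hwalk⟩ := hreach w hwW
    have hxW : x ∈ (↑W : Set V) := hsub' (by simpa using hx)
    refine ⟨(H.induce (↑Xb : Set V)).connectedComponentMk ⟨x, by simpa using hx⟩, ?_⟩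
    have h1 : f ((H.induce (↑Xb : Set V)).connectedComponentMk ⟨x, by simpa using hx⟩) =
        (H.induce (↑W : Set V)).connectedComponentMk ⟨x, hxW⟩ := rfl
    rw [h1]
    exact (SimpleGraph.ConnectedComponent.eq).2
      (reachable_induce_of_hasWalkIn hwalk.symm hxW hw).symm |>.symm
  haveI : Finite ↥(↑W : Set V) := (W.finite_toSet).to_subtype
  haveI : Finite ↥(↑Xb : Set V) := (Xb.finite_toSet).to_subtype
  haveI : Finite (H.induce (↑Xb : Set V)).ConnectedComponent := Quot.finite _
  haveI : Finite (H.induce (↑W : Set V)).ConnectedComponent := Quot.finite _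
  have hbij : Function.Bijective f :=
    (Nat.bijective_iff_surjective_and_card f).2 ⟨hfs, hcard.symm⟩
  intro x hx y hy hwalk
  have hxW : x ∈ (↑W : Set V) := hsub' (by simpa using hx)
  have hyW : y ∈ (↑W : Set V) := hsub' (by simpa using hy)
  have hreachW : (H.induce (↑W : Set V)).Reachable ⟨x, hxW⟩ ⟨y, hyW⟩ :=
    reachable_induce_of_hasWalkIn hwalk hxW hyW
  have heq : f ((H.induce (↑Xb : Set V)).connectedComponentMk ⟨x, by simpa using hx⟩) =
      f ((H.induce (↑Xb : Set V)).connectedComponentMk ⟨y, by simpa using hy⟩) := by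
    show (H.induce (↑W : Set V)).connectedComponentMk ⟨x, hxW⟩ =
      (H.induce (↑W : Set V)).connectedComponentMk ⟨y, hyW⟩
    exact (SimpleGraph.ConnectedComponent.eq).2 hreachW
  have := hbij.1 heq
  have hr : (H.induce (↑Xb : Set V)).Reachable ⟨x, by simpa using hx⟩ ⟨y, by simpa using hy⟩ :=
    (SimpleGraph.ConnectedComponent.eq).1 this
  exact hasWalkIn_of_reachable_induce hr

end Aux2

/-- lifting the columns of `K_m × P_{n-2}` into `K_m × P_n`. -/
def liftCol {m n : ℕ} (h : n - 2 ≤ n) (p : Fin m × Fin (n - 2)) : Fin m × Fin n :=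
  (p.1, Fin.castLE h p.2)

lemma liftCol_injective {m n : ℕ} (h : n - 2 ≤ n) :
    Function.Injective (liftCol (m := m) h) := by
  intro a b hab
  obtain ⟨h1, h2⟩ := Prod.mk.injEq _ _ _ _ ▸ hab
  exact Prod.ext h1 (Fin.castLE_inj.1 h2)

lemma liftCol_adj {m n : ℕ} (h : n - 2 ≤ n) (G : SimpleGraph (Fin m))
    (a b : Fin m × Fin (n - 2)) :
    (G □ pathGraph n).Adj (liftCol h a) (liftCol h b) ↔
      (G □ pathGraph (n - 2)).Adj a b := by
  simp only [boxProd_adj, pathGraph_adj, liftCol, Fin.coe_castLE, Fin.castLE_inj]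

def dropCol {m n : ℕ} (h : 3 ≤ n) (p : Fin m × Fin n) : Fin m × Fin (n - 2) :=
  (p.1, ⟨min p.2.1 (n - 3), by omega⟩)

lemma lift_drop {m n : ℕ} (h : 3 ≤ n) (p : Fin m × Fin n) (hp : p.2.1 ≤ n - 3) :
    liftCol (by omega) (dropCol h p) = p := by
  refine Prod.ext rfl (Fin.ext ?_)
  simp [dropCol, liftCol, Nat.min_eq_left hp]

theorem key (m n : ℕ) (hn : 3 ≤ n)
    (j1 j2 j3 : Fin n) (hj1 : (j1 : ℕ) = n - 1) (hj2 : (j2 : ℕ) = n - 2)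
    (hj3 : (j3 : ℕ) = n - 3)
    (j3' : Fin (n - 2)) (hj3' : (j3' : ℕ) = n - 3)
    (Sn Tn1 : Finset (Fin m × Fin n)) (X : Finset (Fin m))
    (hSnc : ∀ p ∈ Sn, p.2 = j1) (hTc : ∀ p ∈ Tn1, p.2 = j2)
    (hSne : Sn.Nonempty) (hTne : Tn1.Nonempty) (hXne : X.Nonempty)
    (hcomp2 : ∀ R, IsCompOf (cycleRow m □ pathGraph n) R (Sn ∪ Tn1) →
      ¬ IsCompOf (cycleRow m □ pathGraph n) R (Sn ∪ Tn1 ∪ X.image (fun q => (q, j3))))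
    (hk2 : kcomp (cycleRow m □ pathGraph n) (Sn ∪ Tn1 ∪ X.image (fun q => (q, j3))) =
      kcomp (cycleRow m □ pathGraph n) (X.image (fun q => (q, j3)))) :
    N' m n (Sn ∪ Tn1 ∪ X.image (fun q => (q, j3))) =
      N' m (n - 2) (X.image (fun q => (q, j3'))) := by

  classical
  have hle : n - 2 ≤ n := by omega
  set Xb := X.image (fun q => (q, j3)) with hXbdef
  set XS := X.image (fun q => (q, j3')) with hXSdef
  set U0 := Sn ∪ Tn1 with hU0
  set Y := U0 ∪ Xb with hY
  set Cyb := cycleRow m □ pathGraph n with hCyb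
  set Kb := (⊤ : SimpleGraph (Fin m)) □ pathGraph n with hKb
  set Cys := cycleRow m □ pathGraph (n - 2) with hCys
  set Ks := (⊤ : SimpleGraph (Fin m)) □ pathGraph (n - 2) with hKs
  have hupinj : Function.Injective (liftCol (m := m) hle) := liftCol_injective hle
  -- column membership facts
  have hXbc : ∀ p ∈ Xb, p.2 = j3 := by
    intro p hp; rw [hXbdef] at hp
    obtain ⟨q, _, rfl⟩ := Finset.mem_image.1 hp; rfl
  have hXSc : ∀ p ∈ XS, p.2 = j3' := by
    intro p hp; rw [hXSdef] at hp
    obtain ⟨q, _, rfl⟩ := Finset.mem_image.1 hp; rfl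
  have hXbne : Xb.Nonempty := by rw [hXbdef]; exact hXne.image _
  have hXSne : XS.Nonempty := by rw [hXSdef]; exact hXne.image _
  have hne12 : j1 ≠ j2 := by intro h; have := congrArg Fin.val h; omega
  have hne13 : j1 ≠ j3 := by intro h; have := congrArg Fin.val h; omega
  have hne23 : j2 ≠ j3 := by intro h; have := congrArg Fin.val h; omega
  -- filters of constant-column sets
  have hfconst : ∀ {k : ℕ} (S : Finset (Fin m × Fin k)) (j0 j : Fin k),
      (∀ p ∈ S, p.2 = j0) → (j = j0 → S.filter (fun p => p.2 = j) = S) ∧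
        (j ≠ j0 → S.filter (fun p => p.2 = j) = ∅) := by
    intro k S j0 j hS
    constructor
    · rintro rfl; exact Finset.filter_true_of_mem hS
    · intro hne
      refine Finset.filter_false_of_mem ?_
      intro p hp hpj
      exact hne ((hS p hp ▸ hpj : j0 = j).symm)
  have hfY : ∀ j : Fin n, Y.filter (fun p => p.2 = j) =
      (Sn.filter (fun p => p.2 = j)) ∪ (Tn1.filter (fun p => p.2 = j)) ∪
        (Xb.filter (fun p => p.2 = j)) := by
    intro j; rw [hY, hU0, Finset.filter_union, Finset.filter_union]
  have hfY1 : Y.filter (fun p => p.2 = j1) = Sn := by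
    rw [hfY, (hfconst Sn j1 j1 hSnc).1 rfl, (hfconst Tn1 j2 j1 hTc).2 hne12,
      (hfconst Xb j3 j1 hXbc).2 hne13]
    simp
  have hfY2 : Y.filter (fun p => p.2 = j2) = Tn1 := by
    rw [hfY, (hfconst Sn j1 j2 hSnc).2 hne12.symm, (hfconst Tn1 j2 j2 hTc).1 rfl,
      (hfconst Xb j3 j2 hXbc).2 hne23]
    simp
  have hfY3 : Y.filter (fun p => p.2 = j3) = Xb := by
    rw [hfY, (hfconst Sn j1 j3 hSnc).2 hne13.symm, (hfconst Tn1 j2 j3 hTc).2 hne23.symm,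
      (hfconst Xb j3 j3 hXbc).1 rfl]
    simp
  have hfY0 : ∀ j : Fin n, j ≠ j1 → j ≠ j2 → j ≠ j3 →
      Y.filter (fun p => p.2 = j) = ∅ := by
    intro j h1 h2 h3
    rw [hfY, (hfconst Sn j1 j hSnc).2 h1, (hfconst Tn1 j2 j hTc).2 h2,
      (hfconst Xb j3 j hXbc).2 h3]
    simp
  -- condition equivalences
  have hcondB : ∀ C' : Finset (Fin m × Fin n),
      (∀ j : Fin n, (Y.filter (fun p => p.2 = j)).Nonempty →
        C'.filter (fun p => p.2 = j) = Y.filter (fun p => p.2 = j)) ↔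
      (C'.filter (fun p => p.2 = j1) = Sn ∧ C'.filter (fun p => p.2 = j2) = Tn1 ∧
        C'.filter (fun p => p.2 = j3) = Xb) := by
    intro C'
    constructor
    · intro h
      refine ⟨?_, ?_, ?_⟩
      · have := h j1 (by rw [hfY1]; exact hSne); rwa [hfY1] at this
      · have := h j2 (by rw [hfY2]; exact hTne); rwa [hfY2] at this
      · have := h j3 (by rw [hfY3]; exact hXbne); rwa [hfY3] at this
    · rintro ⟨h1, h2, h3⟩ j hne
      by_cases e1 : j = j1
      · subst e1; rw [hfY1]; exact h1
      · by_cases e2 : j = j2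
        · subst e2; rw [hfY2]; exact h2
        · by_cases e3 : j = j3
          · subst e3; rw [hfY3]; exact h3
          · rw [hfY0 j e1 e2 e3] at hne; exact absurd hne (by simp)
  have hfXS : ∀ j : Fin (n - 2), XS.filter (fun p => p.2 = j) =
      if j = j3' then XS else ∅ := by
    intro j
    by_cases h : j = j3'
    · rw [if_pos h]; exact (hfconst XS j3' j hXSc).1 h
    · rw [if_neg h]; exact (hfconst XS j3' j hXSc).2 h
  have hcondS : ∀ D : Finset (Fin m × Fin (n - 2)),
      (∀ j : Fin (n - 2), (XS.filter (fun p => p.2 = j)).Nonempty →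
        D.filter (fun p => p.2 = j) = XS.filter (fun p => p.2 = j)) ↔
      D.filter (fun p => p.2 = j3') = XS := by
    intro D
    constructor
    · intro h
      have := h j3' (by rw [hfXS, if_pos rfl]; exact hXSne)
      rwa [hfXS, if_pos rfl] at this
    · intro h j hne
      by_cases e : j = j3'
      · subst e; rw [hfXS, if_pos rfl]; exact h
      · rw [hfXS, if_neg e] at hne; exact absurd hne (by simp)
  -- cycle graph is a subgraph of the complete-row graph
  have hCyK : Cyb ≤ Kb := by
    intro a b hab
    rw [hCyb] at hab; rw [hKb]
    rcases SimpleGraph.boxProd_adj.1 hab with ⟨h, h2⟩ | ⟨h, h2⟩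
    · exact SimpleGraph.boxProd_adj.2 (Or.inl ⟨h.ne, h2⟩)
    · exact SimpleGraph.boxProd_adj.2 (Or.inr ⟨h, h2⟩)
  -- from hcomp2: every vertex of U0 reaches Xb inside Y (in the cycle graph)
  have hU0Y : U0 ⊆ Y := by rw [hY]; exact Finset.subset_union_left
  have hXbY : Xb ⊆ Y := by rw [hY]; exact Finset.subset_union_right
  have hcomp2Reach : ∀ u ∈ U0, ∃ x ∈ Xb, hasWalkIn Cyb (↑Y : Set (Fin m × Fin n)) u x := by
    intro u hu
    obtain ⟨hRcomp, huR⟩ := compOf_isCompOf Cyb U0 hu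
    obtain ⟨x, hxR, y, hyY, hyR, hadj⟩ :=
      not_isCompOf_elim hRcomp hU0Y (hcomp2 _ hRcomp)
    have hxU0 : x ∈ U0 := Finset.filter_subset _ _ hxR
    rcases Finset.mem_union.1 (hY ▸ hyY) with hyU | hyXb
    · exact absurd hadj (hRcomp.2.2.2 x hxR y hyU hyR)
    · refine ⟨y, hyXb, ?_⟩
      have hwx : hasWalkIn Cyb (↑U0 : Set (Fin m × Fin n)) u x :=
        (Finset.mem_filter.1 hxR).2
      exact (hwx.mono_set (by exact_mod_cast hU0Y)).trans
        (hasWalkIn.of_adj hadj (by exact_mod_cast hU0Y hxU0) (by exact_mod_cast hXbY hyXb))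
  -- membership of U0 forces the column to be n-1 or n-2
  have hU0col : ∀ u ∈ U0, u.2.1 = n - 1 ∨ u.2.1 = n - 2 := by
    intro u hu
    rcases Finset.mem_union.1 (hU0 ▸ hu) with h | h
    · exact Or.inl (by rw [hSnc u h]; exact hj1)
    · exact Or.inr (by rw [hTc u h]; exact hj2)
  -- boundary lemma
  have hbound : ∀ (G : SimpleGraph (Fin m)) (Bp : Finset (Fin m × Fin n)),
      (∀ p ∈ Bp, p.2.1 < n - 2) → (Bp.filter (fun p => p.2 = j3) = Xb) →
      ∀ b ∈ Bp, ∀ u ∈ U0, (G □ pathGraph n).Adj b u → b ∈ Xb := by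
    intro G Bp hcol hfilt b hb u hu hadj
    have hb2 : b.2.1 < n - 2 := hcol b hb
    have hu2 := hU0col u hu
    rcases SimpleGraph.boxProd_adj.1 hadj with ⟨_, h2⟩ | ⟨h2, _⟩
    · have := congrArg Fin.val h2; rcases hu2 with h | h <;> omega
    · rcases SimpleGraph.pathGraph_adj.1 h2 with h | h
      · have hb3 : b.2.1 = n - 3 := by rcases hu2 with h' | h' <;> omega
        have : b.2 = j3 := Fin.ext (by rw [hb3, hj3])
        rw [← hfilt]; exact Finset.mem_filter.2 ⟨hb, this⟩
      · rcases hu2 with h' | h' <;> omega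
  -- disjointness of low columns and U0
  have hdisjBU : ∀ (Bp : Finset (Fin m × Fin n)), (∀ p ∈ Bp, p.2.1 < n - 2) →
      ∀ x, x ∈ Bp → x ∈ U0 → False := by
    intro Bp hcol x hxB hxU
    have := hcol x hxB
    rcases hU0col x hxU with h | h <;> omega
  -- bridging inside Xb for the cycle graph
  have bridgeCy : ∀ x ∈ Xb, ∀ y ∈ Xb,
      hasWalkIn Cyb (↑U0 ∪ ↑Xb : Set (Fin m × Fin n)) x y →
      hasWalkIn Cyb (↑Xb : Set (Fin m × Fin n)) x y := by
    have hco : (↑U0 ∪ ↑Xb : Set (Fin m × Fin n)) = ↑Y := by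
      simp [hY, hU0, Set.union_assoc]
    intro x hx y hy hw
    rw [hco] at hw
    refine comp_collapse hXbY ?_ hk2 x hx y hy hw
    intro w hw'
    rcases Finset.mem_union.1 (hY ▸ hw') with h | h
    · exact hcomp2Reach w h
    · exact ⟨w, h, hasWalkIn.refl (by exact_mod_cast hXbY h)⟩
  -- image column facts
  have himgcol : ∀ (D : Finset (Fin m × Fin (n - 2))),
      ∀ p ∈ D.image (liftCol (m := m) hle), (p.2 : ℕ) < n - 2 := by
    intro D p hp
    obtain ⟨q, _, rfl⟩ := Finset.mem_image.1 hp
    exact q.2.isLt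
  have hXbimg : ∀ D : Finset (Fin m × Fin (n - 2)),
      D.filter (fun p => p.2 = j3') = XS →
      (D.image (liftCol hle)).filter (fun p => p.2 = j3) = Xb := by
    intro D hD
    rw [Finset.filter_image]
    have e1 : D.filter (fun a => (liftCol hle a).2 = j3) =
        D.filter (fun p => p.2 = j3') := by
      apply Finset.filter_congr
      intro p _
      simp only [liftCol, Fin.ext_iff, Fin.coe_castLE, hj3, hj3']
    rw [e1, hD, hXSdef, hXbdef, Finset.image_image]
    have e2 : (liftCol (m := m) hle ∘ fun q => (q, j3')) = fun q => (q, j3) := by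
      funext q
      exact Prod.ext rfl (Fin.ext (by simp [liftCol, hj3, hj3']))
    rw [e2]
  -- forward direction : the image of a small admissible set is big-admissible
  have forward : ∀ D : Finset (Fin m × Fin (n - 2)), D ∈ Cmn' m (n - 2) →
      D.filter (fun p => p.2 = j3') = XS →
      (D.image (liftCol hle) ∪ Sn ∪ Tn1) ∈ Cmn' m n ∧
      ((D.image (liftCol hle) ∪ Sn ∪ Tn1).filter (fun p => p.2 = j1) = Sn ∧
       (D.image (liftCol hle) ∪ Sn ∪ Tn1).filter (fun p => p.2 = j2) = Tn1 ∧
       (D.image (liftCol hle) ∪ Sn ∪ Tn1).filter (fun p => p.2 = j3) = Xb) := by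
    intro D hD hDf
    obtain ⟨hDK, hDnc, hDcols⟩ := hD
    have hBcol := himgcol D
    have hBf3 : (D.image (liftCol hle)).filter (fun p => p.2 = j3) = Xb := hXbimg D hDf
    have hXbBp : Xb ⊆ D.image (liftCol hle) := by
      rw [← hBf3]; exact Finset.filter_subset _ _
    have hDne : D.Nonempty := by
      obtain ⟨w, hw⟩ := hXSne
      rw [← hDf] at hw
      exact ⟨w, Finset.filter_subset _ _ hw⟩
    have hBne : (D.image (liftCol hle)).Nonempty := hDne.image _
    have hunion : D.image (liftCol hle) ∪ Sn ∪ Tn1 = D.image (liftCol hle) ∪ U0 := by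
      rw [hU0, Finset.union_assoc]
    have hBempty1 : (D.image (liftCol hle)).filter (fun p => p.2 = j1) = ∅ :=
      Finset.filter_false_of_mem (fun p hp h => by
        have h1 := hBcol p hp; have h2 := congrArg Fin.val h; rw [hj1] at h2; omega)
    have hBempty2 : (D.image (liftCol hle)).filter (fun p => p.2 = j2) = ∅ :=
      Finset.filter_false_of_mem (fun p hp h => by
        have h1 := hBcol p hp; have h2 := congrArg Fin.val h; rw [hj2] at h2; omega)
    have hf1 : (D.image (liftCol hle) ∪ Sn ∪ Tn1).filter (fun p => p.2 = j1) = Sn := by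
      rw [Finset.filter_union, Finset.filter_union, (hfconst Sn j1 j1 hSnc).1 rfl,
        (hfconst Tn1 j2 j1 hTc).2 hne12, hBempty1]
      simp
    have hf2 : (D.image (liftCol hle) ∪ Sn ∪ Tn1).filter (fun p => p.2 = j2) = Tn1 := by
      rw [Finset.filter_union, Finset.filter_union, (hfconst Sn j1 j2 hSnc).2 hne12.symm,
        (hfconst Tn1 j2 j2 hTc).1 rfl, hBempty2]
      simp
    have hf3 : (D.image (liftCol hle) ∪ Sn ∪ Tn1).filter (fun p => p.2 = j3) = Xb := by
      rw [Finset.filter_union, Finset.filter_union, (hfconst Sn j1 j3 hSnc).2 hne13.symm,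
        (hfconst Tn1 j2 j3 hTc).2 hne23.symm, hBf3]
      simp
    have hcoeu : (↑(D.image (liftCol hle) ∪ Sn ∪ Tn1) : Set (Fin m × Fin n)) =
        ↑(D.image (liftCol hle)) ∪ ↑U0 := by
      rw [hunion]; simp
    have hYsub : (↑Y : Set (Fin m × Fin n)) ⊆ ↑(D.image (liftCol hle)) ∪ ↑U0 := by
      intro z hz
      rcases Finset.mem_union.1 (by exact_mod_cast (hY ▸ hz) : z ∈ U0 ∪ Xb) with h | h
      · exact Or.inr (by exact_mod_cast h)
      · exact Or.inl (by exact_mod_cast hXbBp h)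
    have hBK : ∀ u ∈ D.image (liftCol hle), ∀ v ∈ D.image (liftCol hle),
        hasWalkIn Kb (↑(D.image (liftCol hle)) : Set (Fin m × Fin n)) u v := by
      intro u hu v hv
      obtain ⟨a, ha, rfl⟩ := Finset.mem_image.1 hu
      obtain ⟨b, hb, rfl⟩ := Finset.mem_image.1 hv
      exact (transfer hupinj (liftCol_adj hle ⊤) D).2 (((connIff Ks D).1 hDK).2 a ha b hb)
    refine ⟨⟨?_, ?_, ?_⟩, hf1, hf2, hf3⟩
    · -- K-connectivity
      have hUK : ∀ u ∈ U0, ∃ x ∈ D.image (liftCol hle),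
          hasWalkIn Kb (↑(D.image (liftCol hle)) ∪ ↑U0) u x := by
        intro u hu
        obtain ⟨x, hxX, hwalk⟩ := hcomp2Reach u hu
        exact ⟨x, hXbBp hxX, (hwalk.mono_graph hCyK).mono_set hYsub⟩
      have hKconn : IsConnSet Kb (D.image (liftCol hle) ∪ U0) := by
        refine (connIff _ _).2 ⟨⟨_, Finset.mem_union_left _ hBne.choose_spec⟩, glue hBK hUK⟩
      rw [hunion]
      exact hKconn
    · -- not cycle-connected
      intro hcon
      apply hDnc
      refine (connIff Cys D).2 ⟨hDne, ?_⟩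
      intro a ha b hb
      have hpairs := ((connIff Cyb _).1 hcon).2
      have hmema : liftCol hle a ∈ D.image (liftCol hle) ∪ Sn ∪ Tn1 :=
        Finset.mem_union_left _ (Finset.mem_union_left _ (Finset.mem_image_of_mem _ ha))
      have hmemb : liftCol hle b ∈ D.image (liftCol hle) ∪ Sn ∪ Tn1 :=
        Finset.mem_union_left _ (Finset.mem_union_left _ (Finset.mem_image_of_mem _ hb))
      have hwalk : hasWalkIn Cyb (↑(D.image (liftCol hle)) ∪ ↑U0)
          (liftCol hle a) (liftCol hle b) := by
        have h1 := hpairs _ hmema _ hmemb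
        rwa [hcoeu] at h1
      have h2 := trunc (hdisjBU _ (himgcol D)) (hbound (cycleRow m) _ (himgcol D) hBf3)
        (fun x hx y hy hw => (bridgeCy x hx y hy hw).mono_set (by exact_mod_cast hXbBp))
        (Finset.mem_image_of_mem _ ha) (Finset.mem_image_of_mem _ hb) hwalk
      exact (transfer hupinj (liftCol_adj hle (cycleRow m)) D).1 h2
    · -- columns nonempty
      intro j
      rcases Nat.lt_or_ge j.1 (n - 2) with hj | hj
      · obtain ⟨q, hq⟩ := hDcols ⟨j.1, hj⟩
        obtain ⟨hqD, hq2⟩ := Finset.mem_filter.1 hq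
        refine ⟨liftCol hle q, Finset.mem_filter.2
          ⟨Finset.mem_union_left _ (Finset.mem_union_left _ (Finset.mem_image_of_mem _ hqD)), ?_⟩⟩
        have := congrArg Fin.val hq2
        exact Fin.ext (by simpa [liftCol] using this)
      · have hcase : j.1 = n - 2 ∨ j.1 = n - 1 := by have := j.isLt; omega
        rcases hcase with h | h
        · obtain ⟨t, ht⟩ := hTne
          refine ⟨t, Finset.mem_filter.2 ⟨Finset.mem_union_right _ ht, ?_⟩⟩
          rw [hTc t ht]
          exact Fin.ext (by rw [hj2, h])
        · obtain ⟨t, ht⟩ := hSne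
          refine ⟨t, Finset.mem_filter.2
            ⟨Finset.mem_union_left _ (Finset.mem_union_right _ ht), ?_⟩⟩
          rw [hSnc t ht]
          exact Fin.ext (by rw [hj1, h])
  -- backward direction
  have backward : ∀ C' : Finset (Fin m × Fin n), C' ∈ Cmn' m n →
      (C'.filter (fun p => p.2 = j1) = Sn ∧ C'.filter (fun p => p.2 = j2) = Tn1 ∧
        C'.filter (fun p => p.2 = j3) = Xb) →
      ∃ D : Finset (Fin m × Fin (n - 2)), (D ∈ Cmn' m (n - 2) ∧
        D.filter (fun p => p.2 = j3') = XS) ∧ D.image (liftCol hle) ∪ Sn ∪ Tn1 = C' := by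
    intro C' hC' hfs
    obtain ⟨hCK, hCnc, hCcols⟩ := hC'
    obtain ⟨hf1, hf2, hf3⟩ := hfs
    set Bp := C'.filter (fun p => (p.2 : ℕ) < n - 2) with hBp
    set D := Bp.image (dropCol hn) with hD
    have hBcol : ∀ p ∈ Bp, (p.2 : ℕ) < n - 2 := fun p hp => (Finset.mem_filter.1 hp).2
    have hsplit : C' = Bp ∪ U0 := by
      ext p
      constructor
      · intro hp
        by_cases hc : (p.2 : ℕ) < n - 2
        · exact Finset.mem_union_left _ (Finset.mem_filter.2 ⟨hp, hc⟩)
        · have hcase : (p.2 : ℕ) = n - 2 ∨ (p.2 : ℕ) = n - 1 := by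
            have := p.2.isLt; omega
          refine Finset.mem_union_right _ ?_
          rw [hU0]
          rcases hcase with h | h
          · refine Finset.mem_union_right _ ?_
            rw [← hf2]
            exact Finset.mem_filter.2 ⟨hp, Fin.ext (by rw [hj2, h])⟩
          · refine Finset.mem_union_left _ ?_
            rw [← hf1]
            exact Finset.mem_filter.2 ⟨hp, Fin.ext (by rw [hj1, h])⟩
      · intro hp
        rcases Finset.mem_union.1 hp with h | h
        · exact Finset.filter_subset _ _ h
        · rcases Finset.mem_union.1 (hU0 ▸ h) with h' | h'
          · rw [← hf1] at h'; exact Finset.filter_subset _ _ h'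
          · rw [← hf2] at h'; exact Finset.filter_subset _ _ h'
    have hBf3 : Bp.filter (fun p => p.2 = j3) = Xb := by
      rw [hBp, Finset.filter_filter]
      rw [← hf3]
      apply Finset.filter_congr
      intro p _
      constructor
      · rintro ⟨_, h⟩; exact h
      · intro h
        refine ⟨?_, h⟩
        have := congrArg Fin.val h
        rw [hj3] at this; omega
    have hXbBp : Xb ⊆ Bp := by rw [← hBf3]; exact Finset.filter_subset _ _
    have hlift : ∀ p ∈ Bp, liftCol hle (dropCol hn p) = p := by
      intro p hp
      exact lift_drop hn p (by have := hBcol p hp; omega)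
    have himdrop : D.image (liftCol hle) = Bp := by
      rw [hD, Finset.image_image]
      calc Bp.image (liftCol hle ∘ dropCol hn) = Bp.image id := Finset.image_congr hlift
        _ = Bp := Finset.image_id
    have hDf : D.filter (fun p => p.2 = j3') = XS := by
      rw [hD, Finset.filter_image]
      have e1 : Bp.filter (fun a => (dropCol hn a).2 = j3') =
          Bp.filter (fun p => p.2 = j3) := by
        apply Finset.filter_congr
        intro p hp
        have hc := hBcol p hp
        simp only [dropCol, Fin.ext_iff, hj3, hj3']
        omega
      rw [e1, hBf3, hXbdef, hXSdef, Finset.image_image]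
      have e2 : (dropCol (m := m) hn ∘ fun q => (q, j3)) = fun q => (q, j3') := by
        funext q
        refine Prod.ext rfl (Fin.ext ?_)
        simp only [dropCol, Function.comp_apply, hj3', hj3]
        omega
      rw [e2]
    have hDne : D.Nonempty := by
      obtain ⟨w, hw⟩ := hXSne
      rw [← hDf] at hw
      exact ⟨w, Finset.filter_subset _ _ hw⟩
    have hcoeC : (↑C' : Set (Fin m × Fin n)) = ↑Bp ∪ ↑U0 := by
      rw [hsplit]; simp
    -- small K-connectivity
    have hDK' : IsConnSet Ks D := by
      refine (connIff Ks D).2 ⟨hDne, ?_⟩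
      intro a ha b hb
      have hma : liftCol hle a ∈ Bp := by
        rw [← himdrop]; exact Finset.mem_image_of_mem _ ha
      have hmb : liftCol hle b ∈ Bp := by
        rw [← himdrop]; exact Finset.mem_image_of_mem _ hb
      have hwalk : hasWalkIn Kb (↑Bp ∪ ↑U0) (liftCol hle a) (liftCol hle b) := by
        have h1 := ((connIff Kb C').1 hCK).2 _ (hsplit ▸ Finset.mem_union_left _ hma)
          _ (hsplit ▸ Finset.mem_union_left _ hmb)
        rwa [hcoeC] at h1
      have bridgeK : ∀ x ∈ Xb, ∀ y ∈ Xb,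
          hasWalkIn Kb (↑U0 ∪ ↑Xb : Set (Fin m × Fin n)) x y →
          hasWalkIn Kb (↑Bp : Set (Fin m × Fin n)) x y := by
        intro x hx y hy _
        by_cases hxy : x = y
        · subst hxy; exact hasWalkIn.refl (by exact_mod_cast hXbBp hx)
        · refine hasWalkIn.of_adj ?_ (by exact_mod_cast hXbBp hx) (by exact_mod_cast hXbBp hy)
          rw [hKb]
          refine SimpleGraph.boxProd_adj.2 (Or.inl ⟨?_, ?_⟩)
          · intro he
            exact hxy (Prod.ext he ((hXbc x hx).trans (hXbc y hy).symm))
          · exact (hXbc x hx).trans (hXbc y hy).symm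
      have h2 := trunc (hdisjBU _ hBcol) (hbound ⊤ _ hBcol hBf3) bridgeK hma hmb hwalk
      have h3 : hasWalkIn Kb (↑(D.image (liftCol hle)) : Set (Fin m × Fin n))
          (liftCol hle a) (liftCol hle b) := by rwa [himdrop]
      exact (transfer hupinj (liftCol_adj hle ⊤) D).1 h3
    -- small not cycle-connected
    have hDnc' : ¬ IsConnSet Cys D := by
      intro hcon
      apply hCnc
      refine (connIff Cyb C').2 ⟨?_, ?_⟩
      · obtain ⟨t, ht⟩ := hSne
        rw [← hf1] at ht
        exact ⟨t, Finset.filter_subset _ _ ht⟩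
      · have hBCy : ∀ u ∈ Bp, ∀ v ∈ Bp, hasWalkIn Cyb (↑Bp : Set (Fin m × Fin n)) u v := by
          intro u hu v hv
          rw [← himdrop] at hu hv
          obtain ⟨a, ha, rfl⟩ := Finset.mem_image.1 hu
          obtain ⟨b, hb, rfl⟩ := Finset.mem_image.1 hv
          have h0 := ((connIff Cys D).1 hcon).2 a ha b hb
          have h4 := (transfer hupinj (liftCol_adj hle (cycleRow m)) D).2 h0
          rwa [himdrop] at h4
        have hYsub : (↑Y : Set (Fin m × Fin n)) ⊆ ↑Bp ∪ ↑U0 := by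
          intro z hz
          rcases Finset.mem_union.1 (by exact_mod_cast (hY ▸ hz) : z ∈ U0 ∪ Xb) with h | h
          · exact Or.inr (by exact_mod_cast h)
          · exact Or.inl (by exact_mod_cast hXbBp h)
        have hUCy : ∀ u ∈ U0, ∃ x ∈ Bp, hasWalkIn Cyb (↑Bp ∪ ↑U0) u x := by
          intro u hu
          obtain ⟨x, hxX, hwalk⟩ := hcomp2Reach u hu
          exact ⟨x, hXbBp hxX, hwalk.mono_set hYsub⟩
        intro u hu v hv
        have h5 := glue hBCy hUCy u (hsplit ▸ hu) v (hsplit ▸ hv)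
        have hcoe2 : (↑(Bp ∪ U0) : Set (Fin m × Fin n)) = ↑C' := by rw [← hsplit]
        rwa [hcoe2] at h5
    -- small columns nonempty
    have hDcols' : ∀ j : Fin (n - 2), (D.filter (fun p => p.2 = j)).Nonempty := by
      intro j
      have hjn : (j : ℕ) < n := by have := j.isLt; omega
      obtain ⟨p, hp⟩ := hCcols ⟨j.1, hjn⟩
      obtain ⟨hpC, hp2⟩ := Finset.mem_filter.1 hp
      have hpval : (p.2 : ℕ) = j.1 := congrArg Fin.val hp2
      have hpB : p ∈ Bp := Finset.mem_filter.2 ⟨hpC, by rw [hpval]; exact j.isLt⟩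
      refine ⟨dropCol hn p, Finset.mem_filter.2
        ⟨by rw [hD]; exact Finset.mem_image_of_mem _ hpB, ?_⟩⟩
      refine Fin.ext ?_
      simp only [dropCol]
      have := j.isLt
      omega
    refine ⟨D, ⟨⟨hDK', hDnc', hDcols'⟩, hDf⟩, ?_⟩
    rw [himdrop, hsplit, hU0, Finset.union_assoc]
  -- injectivity of the gluing map
  have hinjPsi : ∀ D1 D2 : Finset (Fin m × Fin (n - 2)),
      D1.image (liftCol hle) ∪ Sn ∪ Tn1 = D2.image (liftCol hle) ∪ Sn ∪ Tn1 → D1 = D2 := by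
    intro D1 D2 h
    have e : ∀ D : Finset (Fin m × Fin (n - 2)),
        (D.image (liftCol hle) ∪ Sn ∪ Tn1).filter (fun p => (p.2 : ℕ) < n - 2) =
          D.image (liftCol hle) := by
      intro D
      rw [Finset.filter_union, Finset.filter_union]
      have e1 : (D.image (liftCol hle)).filter (fun p => (p.2 : ℕ) < n - 2) =
          D.image (liftCol hle) := Finset.filter_true_of_mem (himgcol D)
      have e2 : Sn.filter (fun p => (p.2 : ℕ) < n - 2) = ∅ :=
        Finset.filter_false_of_mem (fun p hp hlt => by
          have := congrArg Fin.val (hSnc p hp); rw [hj1] at this; omega)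
      have e3 : Tn1.filter (fun p => (p.2 : ℕ) < n - 2) = ∅ :=
        Finset.filter_false_of_mem (fun p hp hlt => by
          have := congrArg Fin.val (hTc p hp); rw [hj2] at this; omega)
      rw [e1, e2, e3]
      simp
    have h' := congrArg (fun S : Finset (Fin m × Fin n) =>
      S.filter (fun p => (p.2 : ℕ) < n - 2)) h
    rw [e D1, e D2] at h'
    exact Finset.image_injective hupinj h'
  -- final assembly
  have hsetB : {C | C ∈ Cmn' m n ∧ ∀ j : Fin n,
      (Y.filter (fun p => p.2 = j)).Nonempty →
      C.filter (fun p => p.2 = j) = Y.filter (fun p => p.2 = j)} =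
      (fun D : Finset (Fin m × Fin (n - 2)) => D.image (liftCol hle) ∪ Sn ∪ Tn1) ''
        {D | D ∈ Cmn' m (n - 2) ∧ ∀ j : Fin (n - 2),
          (XS.filter (fun p => p.2 = j)).Nonempty →
          D.filter (fun p => p.2 = j) = XS.filter (fun p => p.2 = j)} := by
    ext C'
    constructor
    · rintro ⟨h1, h2⟩
      obtain ⟨D, ⟨hD1, hD2⟩, hD3⟩ := backward C' h1 ((hcondB C').1 h2)
      exact ⟨D, ⟨hD1, (hcondS D).2 hD2⟩, hD3⟩
    · rintro ⟨D, ⟨hD1, hD2⟩, rfl⟩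
      obtain ⟨h1, h2, h3, h4⟩ := forward D hD1 ((hcondS D).1 hD2)
      exact ⟨h1, (hcondB _).2 ⟨h2, h3, h4⟩⟩
  have e1 : N' m n Y = ({C | C ∈ Cmn' m n ∧ ∀ j : Fin n,
      (Y.filter (fun p => p.2 = j)).Nonempty →
      C.filter (fun p => p.2 = j) = Y.filter (fun p => p.2 = j)} :
        Set (Finset (Fin m × Fin n))).ncard := rfl
  have e2 : N' m (n - 2) XS = ({D | D ∈ Cmn' m (n - 2) ∧ ∀ j : Fin (n - 2),
      (XS.filter (fun p => p.2 = j)).Nonempty →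
      D.filter (fun p => p.2 = j) = XS.filter (fun p => p.2 = j)} :
        Set (Finset (Fin m × Fin (n - 2)))).ncard := rfl
  rw [e1, e2, hsetB]
  exact Set.ncard_image_of_injOn (fun a _ b _ hab => hinjPsi a b hab)

/-- Under the hypotheses of Statement 15, let `X` be a nonempty subset
of `I_{n−2}` with `X∩T_{n−2} ≠ ∅`. If no connected component of
`(C_m×P_n)[S_n ∪ T_{n−1}]` is a connected component of `(C_m×P_n)[S_n ∪ T_{n−1} ∪ X]`,
and `(C_m×P_n)[S_n ∪ T_{n−1} ∪ X]` has the same number of connected components as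
`(C_m×P_n)[X]`, then `N'(K_m×P_n; S_n∪T_{n−1}∪X) = N'(K_m×P_{n−2}; X)`. -/
theorem statement17 (m n : ℕ) (hm : 3 ≤ m) (hn : 3 ≤ n)
    (C : Finset (Fin m × Fin n)) (hC : C ∈ Cmn' m n)
    (Sn Tn1 : Finset (Fin m × Fin n))
    (hSn : Sn = C.filter (fun p => p.2 = (⟨n - 1, by omega⟩ : Fin n)))
    (hTn1 : Tn1 = C.filter (fun p => p.2 = (⟨n - 2, by omega⟩ : Fin n)))
    (hcomp : ∀ R, IsCompOf (cycleRow m □ pathGraph n) R Sn →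
      ¬ IsCompOf (cycleRow m □ pathGraph n) R (Sn ∪ Tn1))
    (hk : kcomp (cycleRow m □ pathGraph n) (Sn ∪ Tn1) <
      kcomp (cycleRow m □ pathGraph n) Tn1)
    (X : Finset (Fin m)) (hX : X.Nonempty)
    (hXT : (X ∩ Tn1.image Prod.fst).Nonempty)
    (hcomp2 : ∀ R, IsCompOf (cycleRow m □ pathGraph n) R (Sn ∪ Tn1) →
      ¬ IsCompOf (cycleRow m □ pathGraph n) R
        (Sn ∪ Tn1 ∪ X.image (fun q => (q, (⟨n - 3, by omega⟩ : Fin n)))))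
    (hk2 : kcomp (cycleRow m □ pathGraph n)
        (Sn ∪ Tn1 ∪ X.image (fun q => (q, (⟨n - 3, by omega⟩ : Fin n)))) =
      kcomp (cycleRow m □ pathGraph n)
        (X.image (fun q => (q, (⟨n - 3, by omega⟩ : Fin n))))) :
    N' m n (Sn ∪ Tn1 ∪ X.image (fun q => (q, (⟨n - 3, by omega⟩ : Fin n)))) =
      N' m (n - 2) (X.image (fun q => (q, (⟨n - 3, by omega⟩ : Fin (n - 2))))) := by
  have hSne : Sn.Nonempty := by rw [hSn]; exact hC.2.2 _
  have hTne : Tn1.Nonempty := by rw [hTn1]; exact hC.2.2 _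
  have hSnc : ∀ p ∈ Sn, p.2 = (⟨n - 1, by omega⟩ : Fin n) := by
    intro p hp; rw [hSn] at hp; exact (Finset.mem_filter.1 hp).2
  have hTc : ∀ p ∈ Tn1, p.2 = (⟨n - 2, by omega⟩ : Fin n) := by
    intro p hp; rw [hTn1] at hp; exact (Finset.mem_filter.1 hp).2
  exact key m n hn (⟨n - 1, by omega⟩ : Fin n) (⟨n - 2, by omega⟩ : Fin n)
    (⟨n - 3, by omega⟩ : Fin n) rfl rfl rfl (⟨n - 3, by omega⟩ : Fin (n - 2)) rfl
    Sn Tn1 X hSnc hTc hSne hTne hX hcomp2 hk2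
end
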